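/- With the hypotheses of the previous statement, if the map X ↦ tr_s(V₁ X V₂†) has an eigenvalue of modulus exactly 1, then there exist φ ∈ ℝ and a unitary W : H_M → H_M such that V₂ = e^{−iφ} (1_s ⊗ W†) V₁ W. -/

import Mathlib

/-!
Write `Y = Xᴴ σ₁⁻¹`. The eigenvalue equation says that two vectors of equal length for the
σ₁⁻¹-weighted Hilbert–Schmidt product have an inner product of the same modulus, so the
equality case of Cauchy–Schwarz gives the intertwining relation `(1 ⊗ Y) V₁ = ν V₂ Y`. It makes
`Yᴴ Y` a fixed point of the dual map `A ↦ V₁ᴴ (1 ⊗ A) V₁`. This map is the transpose of the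
channel of `V₁` for the trace form, so its fixed space has the same dimension as the channel's,
which is one; as it contains `1`, `Yᴴ Y` is a positive multiple of `1` and `Y` is a multiple of a
unitary.
-/

open Matrix
open scoped ComplexOrder Kronecker

/-- Partial trace over the spin (first) tensor factor. -/
noncomputable def ptraceS {s m : Type*} [Fintype s]
    (M : Matrix (s × m) (s × m) ℂ) : Matrix m m ℂ :=
  fun a b => ∑ k : s, M (k, a) (k, b)

open Module in
theorem LinearMap.finrank_ker_eq_of_isAdjointPair {K V : Type*} [Field K] [AddCommGroup V]
    [Module K V] [FiniteDimensional K V] {B : LinearMap.BilinForm K V} (hB : B.SeparatingLeft)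
    {f g : V →ₗ[K] V} (h : B.IsAdjointPair B f g) :
    finrank K (ker f) = finrank K (ker g) := by
  let e : V ≃ₗ[K] Dual K V := B.linearEquivOfInjective
    (LinearMap.ker_eq_bot.mp (LinearMap.separatingLeft_iff_ker_eq_bot.mp hB))
    Subspace.dual_finrank_eq.symm
  have hcomm : g.dualMap ∘ₗ e.toLinearMap = e.toLinearMap ∘ₗ f := by
    ext x y
    exact (h x y).symm
  have hrange : finrank K (range f) = finrank K (range g) := by
    rw [← finrank_range_dualMap_eq_finrank_range g,
      ← LinearMap.range_comp_of_range_eq_top g.dualMap e.range, hcomm, LinearMap.range_comp,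
      LinearEquiv.finrank_map_eq]
  have := f.finrank_range_add_finrank_ker
  have := g.finrank_range_add_finrank_ker
  omega

namespace Matrix

noncomputable def traceForm (m : Type*) [Fintype m] : LinearMap.BilinForm ℂ (Matrix m m ℂ) :=
  (LinearMap.mul ℂ (Matrix m m ℂ)).compr₂ (traceLinearMap m ℂ ℂ)

lemma traceForm_apply {m : Type*} [Fintype m] (A X : Matrix m m ℂ) :
    traceForm m A X = (A * X).trace := rfl

lemma traceForm_separatingLeft {m : Type*} [Fintype m] : (traceForm m).SeparatingLeft :=
  fun A hA => trace_mul_conjTranspose_self_eq_zero_iff.mp (hA Aᴴ)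

section WeightedTrace

variable {n k : Type*} [Fintype n] [Fintype k] {P : Matrix k k ℂ}

lemma eq_zero_of_trace_conjTranspose_mul_self_mul_posDef (hP : P.PosDef) {C : Matrix n k ℂ}
    (h : (Cᴴ * C * P).trace = 0) : C = 0 := by
  rw [Matrix.mul_assoc, trace_mul_comm,
    (hP.posSemidef.mul_mul_conjTranspose_same C).trace_eq_zero_iff] at h
  ext i j
  by_contra hij
  have hrow : star (C i) ≠ 0 := fun h0 => hij (by simpa using congrFun h0 j)
  have hdiag : (C * P * Cᴴ) i i = star (star (C i)) ⬝ᵥ (P *ᵥ star (C i)) := by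
    rw [star_star, dotProduct_mulVec]
    rfl
  have hpos := hP.dotProduct_mulVec_pos hrow
  rw [← hdiag, h] at hpos
  exact lt_irrefl _ hpos

lemma star_trace_conjTranspose_mul_mul (hP : P.IsHermitian) (a b : Matrix n k ℂ) :
    star (aᴴ * b * P).trace = (bᴴ * a * P).trace := by
  rw [← trace_conjTranspose]
  simp only [conjTranspose_mul, hP.eq, conjTranspose_conjTranspose]
  exact trace_mul_comm _ _

/-- Equality case of the Cauchy–Schwarz inequality for the inner product `tr (aᴴ b P)`. -/
lemma eq_smul_of_trace_mul_posDef (hP : P.PosDef) {a b : Matrix n k ℂ} {ν : ℂ} (hν : ‖ν‖ = 1)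
    (hbb : (bᴴ * b * P).trace = (aᴴ * a * P).trace)
    (hab : (aᴴ * b * P).trace = ν * (aᴴ * a * P).trace) : b = ν • a := by
  have hνν : star ν * ν = 1 := by
    rw [Complex.star_def, Complex.conj_mul', hν]
    norm_num
  have hτ : star (aᴴ * a * P).trace = (aᴴ * a * P).trace :=
    star_trace_conjTranspose_mul_mul hP.isHermitian a a
  have hba : (bᴴ * a * P).trace = star ν * (aᴴ * a * P).trace := by
    rw [← star_trace_conjTranspose_mul_mul hP.isHermitian, hab, star_mul', hτ]
  refine sub_eq_zero.mp (eq_zero_of_trace_conjTranspose_mul_self_mul_posDef hP ?_)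
  simp only [conjTranspose_sub, conjTranspose_smul, Matrix.sub_mul, Matrix.mul_sub,
    Matrix.smul_mul, Matrix.mul_smul, trace_sub, trace_smul, smul_eq_mul, hbb, hab, hba]
  linear_combination (-(aᴴ * a * P).trace) * hνν

end WeightedTrace

lemma exists_smul_mem_unitaryGroup_of_conjTranspose_mul_self_eq_smul_one {m : Type*} [Fintype m]
    [DecidableEq m] {Y : Matrix m m ℂ} {t : ℂ} (hY : Y ≠ 0) (ht : Yᴴ * Y = t • 1) :
    ∃ (c : ℂ) (U : Matrix m m ℂ), c ≠ 0 ∧ U ∈ unitaryGroup m ℂ ∧ Y = c • U := by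
  have ht0 : t ≠ 0 := by
    rintro rfl
    exact hY (conjTranspose_mul_self_eq_zero.mp (by rw [ht, zero_smul]))
  obtain ⟨i⟩ : Nonempty m := by
    by_contra! hm
    exact hY (Subsingleton.elim _ _)
  have htnonneg : 0 ≤ t := by
    simpa [ht] using (posSemidef_conjTranspose_mul_self Y).diag_nonneg (i := i)
  obtain ⟨r, hr, rfl⟩ := RCLike.pos_iff_exists_ofReal.mp (lt_of_le_of_ne htnonneg (Ne.symm ht0))
  have hc : ((√r : ℝ) : ℂ) ≠ 0 := by exact_mod_cast (Real.sqrt_pos.mpr hr).ne'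
  refine ⟨√r, ((√r : ℝ) : ℂ)⁻¹ • Y, hc, ?_, by rw [smul_smul, mul_inv_cancel₀ hc, one_smul]⟩
  rw [mem_unitaryGroup_iff', star_eq_conjTranspose, conjTranspose_smul, smul_mul_smul_comm, ht,
    smul_smul, star_inv₀, Complex.star_def, Complex.conj_ofReal, ← mul_inv, ← Complex.ofReal_mul,
    Real.mul_self_sqrt hr.le]
  simp [hr.ne']

end Matrix

lemma Complex.exp_neg_I_mul_arg {ν : ℂ} (hν : ‖ν‖ = 1) : exp (-(I * ν.arg)) = ν⁻¹ := by
  have h := norm_mul_exp_arg_mul_I ν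
  rw [hν, ofReal_one, one_mul] at h
  rw [exp_neg, mul_comm, h]

section Transfer

variable {s m : Type*} [Fintype s]

lemma ptraceS_add (M N : Matrix (s × m) (s × m) ℂ) :
    ptraceS (M + N) = ptraceS M + ptraceS N := by
  ext a b
  simp [ptraceS, Finset.sum_add_distrib]

lemma ptraceS_smul (c : ℂ) (M : Matrix (s × m) (s × m) ℂ) :
    ptraceS (c • M) = c • ptraceS M := by
  ext a b
  simp [ptraceS, Finset.mul_sum]

variable [Fintype m]

lemma trace_ptraceS (M : Matrix (s × m) (s × m) ℂ) : (ptraceS M).trace = M.trace := by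
  simp only [trace, diag, ptraceS, Fintype.sum_prod_type]
  exact Finset.sum_comm

noncomputable def transfer (V W : Matrix (s × m) m ℂ) : Matrix m m ℂ →ₗ[ℂ] Matrix m m ℂ where
  toFun X := ptraceS (V * X * Wᴴ)
  map_add' X Y := by rw [Matrix.mul_add, Matrix.add_mul, ptraceS_add]
  map_smul' c X := by rw [Matrix.mul_smul, Matrix.smul_mul, ptraceS_smul, RingHom.id_apply]

lemma transfer_apply (V W : Matrix (s × m) m ℂ) (X : Matrix m m ℂ) :
    transfer V W X = ptraceS (V * X * Wᴴ) := rfl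

variable [DecidableEq s]

lemma ptraceS_one_kronecker_mul (A : Matrix m m ℂ) (M : Matrix (s × m) (s × m) ℂ) :
    ptraceS (((1 : Matrix s s ℂ) ⊗ₖ A) * M) = A * ptraceS M := by
  ext a b
  simp only [ptraceS, mul_apply, kroneckerMap_apply, one_apply, ite_mul, one_mul, zero_mul,
    Fintype.sum_prod_type, Finset.sum_ite_irrel, Finset.sum_const_zero, Finset.sum_ite_eq,
    Finset.mem_univ, if_true, Finset.mul_sum]
  exact Finset.sum_comm

lemma trace_one_kronecker_mul (A : Matrix m m ℂ) (M : Matrix (s × m) (s × m) ℂ) :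
    (((1 : Matrix s s ℂ) ⊗ₖ A) * M).trace = (A * ptraceS M).trace := by
  rw [← trace_ptraceS, ptraceS_one_kronecker_mul]

def transferDual (V W : Matrix (s × m) m ℂ) : Matrix m m ℂ →ₗ[ℂ] Matrix m m ℂ where
  toFun A := Wᴴ * ((1 : Matrix s s ℂ) ⊗ₖ A) * V
  map_add' A B := by rw [kronecker_add, Matrix.mul_add, Matrix.add_mul]
  map_smul' c A := by rw [kronecker_smul, Matrix.mul_smul, Matrix.smul_mul, RingHom.id_apply]

lemma transferDual_apply (V W : Matrix (s × m) m ℂ) (A : Matrix m m ℂ) :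
    transferDual V W A = Wᴴ * ((1 : Matrix s s ℂ) ⊗ₖ A) * V := rfl

lemma trace_transferDual_mul (V W : Matrix (s × m) m ℂ) (A X : Matrix m m ℂ) :
    (transferDual V W A * X).trace = (A * transfer V W X).trace := by
  rw [transferDual_apply, transfer_apply, ← trace_one_kronecker_mul]
  simp only [Matrix.mul_assoc]
  rw [trace_mul_comm Wᴴ]
  simp only [Matrix.mul_assoc]

lemma transferDual_conjTranspose_mul_self (V : Matrix (s × m) m ℂ) (Y : Matrix m m ℂ) :
    transferDual V V (Yᴴ * Y) =
      (((1 : Matrix s s ℂ) ⊗ₖ Y) * V)ᴴ * (((1 : Matrix s s ℂ) ⊗ₖ Y) * V) := by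
  rw [conjTranspose_mul, conjTranspose_kronecker, conjTranspose_one, Matrix.mul_assoc,
    ← Matrix.mul_assoc (_ ⊗ₖ Yᴴ), ← mul_kronecker_mul, Matrix.one_mul, ← Matrix.mul_assoc,
    transferDual_apply]

lemma isAdjointPair_transferDual_sub_one (V : Matrix (s × m) m ℂ) :
    (traceForm m).IsAdjointPair (traceForm m)
      ⇑(transferDual V V - 1 : Module.End ℂ (Matrix m m ℂ))
      ⇑(transfer V V - 1 : Module.End ℂ (Matrix m m ℂ)) := fun A X => by
  simp only [traceForm_apply, LinearMap.sub_apply, Module.End.one_apply, Matrix.sub_mul,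
    Matrix.mul_sub, trace_sub, trace_transferDual_mul]

variable [DecidableEq m]

lemma transferDual_one {V : Matrix (s × m) m ℂ} (hV : Vᴴ * V = 1) :
    transferDual V V 1 = 1 := by
  rw [transferDual_apply, one_kronecker_one, Matrix.mul_one, hV]

lemma exists_eq_smul_one_of_transferDual_eq_self {V : Matrix (s × m) m ℂ} (hV : Vᴴ * V = 1)
    {σ : Matrix m m ℂ} (hfix : ∀ X, X ≠ 0 → transfer V V X = X → ∃ z : ℂ, X = z • σ)
    {A : Matrix m m ℂ} (hA : transferDual V V A = A) : ∃ t : ℂ, A = t • 1 := by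
  rcases isEmpty_or_nonempty m with hm | hm
  · exact ⟨0, Subsingleton.elim _ _⟩
  have hker : LinearMap.ker (transfer V V - 1) ≤ ℂ ∙ σ := fun X hX => by
    obtain rfl | hX0 := eq_or_ne X 0
    · exact Submodule.zero_mem _
    obtain ⟨z, rfl⟩ := hfix X hX0 (sub_eq_zero.mp hX)
    exact Submodule.smul_mem _ z (Submodule.mem_span_singleton_self σ)
  have hone : (1 : Matrix m m ℂ) ∈ LinearMap.ker (transferDual V V - 1) := by
    simp [transferDual_one hV]
  have hspan : ℂ ∙ (1 : Matrix m m ℂ) = LinearMap.ker (transferDual V V - 1) := by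
    refine Submodule.eq_of_le_of_finrank_le ((Submodule.span_singleton_le_iff_mem _ _).mpr hone) ?_
    rw [LinearMap.finrank_ker_eq_of_isAdjointPair traceForm_separatingLeft
      (isAdjointPair_transferDual_sub_one V), finrank_span_singleton one_ne_zero]
    exact (Submodule.finrank_mono hker).trans ((finrank_span_le_card {σ}).trans (by simp))
  have hAker : A ∈ LinearMap.ker (transferDual V V - 1) := by simp [hA]
  obtain ⟨t, ht⟩ := Submodule.mem_span_singleton.mp (hspan ▸ hAker)
  exact ⟨t, ht.symm⟩

/-- Cauchy–Schwarz equality, for the product `tr (aᴴ b σ⁻¹)`, between `a = W Xᴴ` and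
`c σ = (1 ⊗ Y) V σ`, where `Y = Xᴴ σ⁻¹`. -/
theorem one_kronecker_mul_eq_smul_of_transfer_eq_smul {V W : Matrix (s × m) m ℂ}
    (hW : Wᴴ * W = 1) {σ : Matrix m m ℂ} (hσ : σ.PosDef) (hfix : transfer V V σ = σ)
    {ν : ℂ} (hν : ‖ν‖ = 1) {X : Matrix m m ℂ} (heig : transfer V W X = ν • X) :
    ((1 : Matrix s s ℂ) ⊗ₖ (Xᴴ * σ⁻¹)) * V = ν • (W * (Xᴴ * σ⁻¹)) := by
  set Y := Xᴴ * σ⁻¹ with hY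
  have hdet : IsUnit σ.det := (isUnit_iff_isUnit_det σ).mp hσ.isUnit
  have hσσ : σ * σ⁻¹ = 1 := mul_nonsing_inv σ hdet
  have hYσ : Y * σ = Xᴴ := by rw [hY, Matrix.mul_assoc, nonsing_inv_mul σ hdet, Matrix.mul_one]
  have hYH : Yᴴ = σ⁻¹ * X := by
    rw [hY, conjTranspose_mul, hσ.inv.isHermitian.eq, conjTranspose_conjTranspose]
  set a := W * Xᴴ
  set c := ((1 : Matrix s s ℂ) ⊗ₖ Y) * V
  have haa : (aᴴ * a * σ⁻¹).trace = (X * Y).trace := by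
    simp only [a, conjTranspose_mul, conjTranspose_conjTranspose, Matrix.mul_assoc]
    rw [← Matrix.mul_assoc Wᴴ, hW, Matrix.one_mul]
  have hbb : ((c * σ)ᴴ * (c * σ) * σ⁻¹).trace = (X * Y).trace :=
    calc ((c * σ)ᴴ * (c * σ) * σ⁻¹).trace = (σ * transferDual V V (Yᴴ * Y)).trace := by
          rw [transferDual_conjTranspose_mul_self, conjTranspose_mul, hσ.isHermitian.eq]
          simp only [Matrix.mul_assoc, hσσ, Matrix.mul_one]
          rfl
      _ = (Yᴴ * Y * σ).trace := by rw [trace_mul_comm, trace_transferDual_mul, hfix]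
      _ = (X * Y).trace := by
          rw [Matrix.mul_assoc, hYσ, hYH, Matrix.mul_assoc, trace_mul_comm, Matrix.mul_assoc]
  have hab : (aᴴ * (c * σ) * σ⁻¹).trace = ν * (X * Y).trace :=
    calc (aᴴ * (c * σ) * σ⁻¹).trace = (X * transferDual V W Y).trace := by
          simp only [a, c, transferDual_apply, conjTranspose_mul, conjTranspose_conjTranspose,
            Matrix.mul_assoc, hσσ, Matrix.mul_one]
      _ = ν * (X * Y).trace := by
          rw [trace_mul_comm, trace_transferDual_mul, heig, Matrix.mul_smul, trace_smul,
            trace_mul_comm, smul_eq_mul]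
  have hca : c * σ = ν • a :=
    eq_smul_of_trace_mul_posDef hσ.inv hν (hbb.trans haa.symm) (haa ▸ hab)
  calc c = c * σ * σ⁻¹ := by rw [Matrix.mul_assoc, hσσ, Matrix.mul_one]
    _ = ν • (W * Y) := by rw [hca, Matrix.smul_mul, Matrix.mul_assoc]

lemma transferDual_conjTranspose_mul_self_eq_self {V W : Matrix (s × m) m ℂ} (hW : Wᴴ * W = 1)
    {Y : Matrix m m ℂ} {ν : ℂ} (hν : ‖ν‖ = 1)
    (h : ((1 : Matrix s s ℂ) ⊗ₖ Y) * V = ν • (W * Y)) :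
    transferDual V V (Yᴴ * Y) = Yᴴ * Y := by
  rw [transferDual_conjTranspose_mul_self, h, conjTranspose_smul, Matrix.smul_mul,
    Matrix.mul_smul, smul_smul, conjTranspose_mul, Matrix.mul_assoc, ← Matrix.mul_assoc Wᴴ, hW,
    Matrix.one_mul, Complex.star_def, Complex.conj_mul', hν, Complex.ofReal_one, one_pow,
    one_smul]

lemma eq_inv_smul_of_one_kronecker_smul_mul_eq_smul {V W : Matrix (s × m) m ℂ}
    {U : Matrix m m ℂ} (hU : U ∈ unitaryGroup m ℂ) {c ν : ℂ} (hc : c ≠ 0) (hν : ν ≠ 0)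
    (h : ((1 : Matrix s s ℂ) ⊗ₖ (c • U)) * V = ν • (W * (c • U))) :
    W = ν⁻¹ • (((1 : Matrix s s ℂ) ⊗ₖ U) * V * Uᴴ) := by
  rw [kronecker_smul, Matrix.smul_mul, Matrix.mul_smul, smul_comm] at h
  rw [smul_right_injective _ hc h, Matrix.smul_mul, Matrix.mul_assoc,
    show U * Uᴴ = 1 from Unitary.mul_star_self_of_mem hU, Matrix.mul_one, inv_smul_smul₀ hν]

end Transfer

theorem cross_transfer_peripheral_eigenvalue_implies_equiv_general {s m : Type*}
    [Fintype s] [Fintype m] [DecidableEq s] [DecidableEq m]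
    (V₁ V₂ : Matrix (s × m) m ℂ) (σ₁ : Matrix m m ℂ)
    (hV₁ : V₁ᴴ * V₁ = 1) (hV₂ : V₂ᴴ * V₂ = 1)
    (hσ₁ : σ₁.PosDef)
    (hfix₁ : ptraceS (V₁ * σ₁ * V₁ᴴ) = σ₁)
    (hper₁ : ∀ (X : Matrix m m ℂ) (c : ℂ), X ≠ 0 → ‖c‖ = 1 →
      ptraceS (V₁ * X * V₁ᴴ) = c • X → c = 1 ∧ ∃ z : ℂ, X = z • σ₁)
    (ν : ℂ) (X : Matrix m m ℂ) (hX : X ≠ 0)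
    (heig : ptraceS (V₁ * X * V₂ᴴ) = ν • X)
    (hν : ‖ν‖ = 1) :
    ∃ (φ : ℝ) (W : Matrix m m ℂ), Wᴴ * W = 1 ∧ W * Wᴴ = 1 ∧
      V₂ = Complex.exp (-(Complex.I * φ)) •
        (((1 : Matrix s s ℂ) ⊗ₖ Wᴴ) * V₁ * W) := by
  set Y := Xᴴ * σ₁⁻¹ with hY
  have hint : ((1 : Matrix s s ℂ) ⊗ₖ Y) * V₁ = ν • (V₂ * Y) :=
    one_kronecker_mul_eq_smul_of_transfer_eq_smul hV₂ hσ₁ hfix₁ hν heig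
  obtain ⟨t, ht⟩ := exists_eq_smul_one_of_transferDual_eq_self hV₁
    (fun Z hZ0 hZ => (hper₁ Z 1 hZ0 norm_one (by rwa [one_smul])).2)
    (transferDual_conjTranspose_mul_self_eq_self hV₂ hν hint)
  have hY0 : Y ≠ 0 := by
    rw [hY, Ne, hσ₁.inv.isUnit.mul_left_eq_zero, conjTranspose_eq_zero]
    exact hX
  obtain ⟨c, U, hc, hU, hYU⟩ :=
    exists_smul_mem_unitaryGroup_of_conjTranspose_mul_self_eq_smul_one hY0 ht
  rw [hYU] at hint
  have hUstar : Uᴴ ∈ unitaryGroup m ℂ := Unitary.star_mem hU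
  refine ⟨ν.arg, Uᴴ, Unitary.star_mul_self_of_mem hUstar, Unitary.mul_star_self_of_mem hUstar, ?_⟩
  rw [Complex.exp_neg_I_mul_arg hν, conjTranspose_conjTranspose]
  exact eq_inv_smul_of_one_kronecker_smul_mul_eq_smul hU hc
    (norm_ne_zero_iff.mp (hν ▸ one_ne_zero)) hint

/-- If `V₁, V₂ : H_M → H_s ⊗ H_M` are isometries whose induced channels have unique
full-rank fixed points and trivial peripheral spectrum otherwise, and the map
`X ↦ tr_s(V₁ X V₂ᴴ)` has an eigenvalue of modulus exactly 1, then there exist `φ ∈ ℝ`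
and a unitary `W` on `H_M` such that `V₂ = e^{−iφ} (1_s ⊗ Wᴴ) V₁ W`. -/
theorem cross_transfer_peripheral_eigenvalue_implies_equiv {s m : Type*}
    [Fintype s] [Fintype m] [DecidableEq s] [DecidableEq m]
    (V₁ V₂ : Matrix (s × m) m ℂ) (σ₁ σ₂ : Matrix m m ℂ)
    (hV₁ : V₁ᴴ * V₁ = 1) (hV₂ : V₂ᴴ * V₂ = 1)
    (hσ₁ : σ₁.PosDef) (hσ₂ : σ₂.PosDef)
    (hfix₁ : ptraceS (V₁ * σ₁ * V₁ᴴ) = σ₁)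
    (hfix₂ : ptraceS (V₂ * σ₂ * V₂ᴴ) = σ₂)
    (hper₁ : ∀ (X : Matrix m m ℂ) (c : ℂ), X ≠ 0 → ‖c‖ = 1 →
      ptraceS (V₁ * X * V₁ᴴ) = c • X → c = 1 ∧ ∃ z : ℂ, X = z • σ₁)
    (hper₂ : ∀ (X : Matrix m m ℂ) (c : ℂ), X ≠ 0 → ‖c‖ = 1 →
      ptraceS (V₂ * X * V₂ᴴ) = c • X → c = 1 ∧ ∃ z : ℂ, X = z • σ₂)
    (ν : ℂ) (X : Matrix m m ℂ) (hX : X ≠ 0)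
    (heig : ptraceS (V₁ * X * V₂ᴴ) = ν • X)
    (hν : ‖ν‖ = 1) :
    ∃ (φ : ℝ) (W : Matrix m m ℂ), Wᴴ * W = 1 ∧ W * Wᴴ = 1 ∧
      V₂ = Complex.exp (-(Complex.I * φ)) •
        (((1 : Matrix s s ℂ) ⊗ₖ Wᴴ) * V₁ * W) :=
  cross_transfer_peripheral_eigenvalue_implies_equiv_general V₁ V₂ σ₁ hV₁ hV₂ hσ₁ hfix₁ hper₁ ν X hX
    heig hν
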